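/- A quantifier-free QML formula s (containing neither ∀X nor ∀P) is QKΠ-valid if and only if it is valid in every standard Kripke multimodal model, i.e., in every QKΠ⁻ model whose propositional domain P is the full powerset of W, under every assignment and at every world. -/

import Mathlib

open Classical

/-- QML formulas over modal indices `S`, individual variables `IV`,
propositional variables `PV`, and predicate symbols `SYM` with arities `ar`. -/
inductive QMLFormula (S IV PV SYM : Type) (ar : SYM → Nat) : Type
  | prop : PV → QMLFormula S IV PV SYM ar
  | pred : (k : SYM) → (Fin (ar k) → IV) → QMLFormula S IV PV SYM ar
  | neg  : QMLFormula S IV PV SYM ar → QMLFormula S IV PV SYM ar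
  | disj : QMLFormula S IV PV SYM ar → QMLFormula S IV PV SYM ar → QMLFormula S IV PV SYM ar
  | allI : IV → QMLFormula S IV PV SYM ar → QMLFormula S IV PV SYM ar
  | allP : PV → QMLFormula S IV PV SYM ar → QMLFormula S IV PV SYM ar
  | box  : S → QMLFormula S IV PV SYM ar → QMLFormula S IV PV SYM ar

/-- A QKΠ⁻ model. -/
structure QKPiMinusModel (S SYM : Type) (ar : SYM → Nat) where
  W : Type
  wNonempty : Nonempty W
  R : S → W → W → Prop
  D : Type
  dNonempty : Nonempty D
  P : Set (Set W)
  pNonempty : P.Nonempty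
  I : W → (k : SYM) → ((Fin (ar k) → D) → Prop)

variable {S IV PV SYM : Type} {ar : SYM → Nat}

/-- A variable assignment: individual variables to `D`, propositional variables
to members of the propositional domain `P`. -/
structure QMLAssignment (IV PV : Type) (M : QKPiMinusModel S SYM ar) where
  iv : IV → M.D
  pv : PV → {A : Set M.W // A ∈ M.P}

variable {M : QKPiMinusModel S SYM ar}

/-- Update of the individual part of an assignment. -/
noncomputable def QMLAssignment.updIV (g : QMLAssignment IV PV M) (X : IV) (d : M.D) :
    QMLAssignment IV PV M :=
  ⟨fun Y => if Y = X then d else g.iv Y, g.pv⟩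

/-- Update of the propositional part of an assignment. -/
noncomputable def QMLAssignment.updPV (g : QMLAssignment IV PV M) (Q : PV)
    (p : {A : Set M.W // A ∈ M.P}) : QMLAssignment IV PV M :=
  ⟨g.iv, fun Q' => if Q' = Q then p else g.pv Q'⟩

/-- Satisfaction `M,g,w ⊨ s`. -/
def QKPiMinusModel.sat (M : QKPiMinusModel S SYM ar) :
    QMLFormula S IV PV SYM ar → QMLAssignment IV PV M → M.W → Prop
  | .prop Q, g, w => w ∈ (g.pv Q).1
  | .pred k Xs, g, w => M.I w k (fun i => g.iv (Xs i))
  | .neg s, g, w => ¬ M.sat s g w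
  | .disj s t, g, w => M.sat s g w ∨ M.sat t g w
  | .allI X s, g, w => ∀ d : M.D, M.sat s (g.updIV X d) w
  | .allP Q s, g, w => ∀ p : {A : Set M.W // A ∈ M.P}, M.sat s (g.updPV Q p) w
  | .box r s, g, w => ∀ v : M.W, M.R r w v → M.sat s g v

/-- The simple type theory embedding `⟦s⟧_{M,g} : W → Prop`. -/
def QKPiMinusModel.embed (M : QKPiMinusModel S SYM ar) :
    QMLFormula S IV PV SYM ar → QMLAssignment IV PV M → M.W → Prop
  | .prop Q, g, w => w ∈ (g.pv Q).1
  | .pred k Xs, g, w => M.I w k (fun i => g.iv (Xs i))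
  | .neg s, g, w => ¬ M.embed s g w
  | .disj s t, g, w => M.embed s g w ∨ M.embed t g w
  | .allI X s, g, w => ∀ d : M.D, M.embed s (g.updIV X d) w
  | .allP Q s, g, w => ∀ p : {A : Set M.W // A ∈ M.P}, M.embed s (g.updPV Q p) w
  | .box r s, g, w => ∀ v : M.W, M.R r w v → M.embed s g v

/-- A QKΠ⁻ model is a QKΠ model if every truth set lies in the propositional domain. -/
def QKPiMinusModel.IsQKPi (IV PV : Type) (M : QKPiMinusModel S SYM ar) : Prop :=
  ∀ (g : QMLAssignment IV PV M) (s : QMLFormula S IV PV SYM ar),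
    {w : M.W | M.sat s g w} ∈ M.P

/-- QKΠ-validity. -/
def QKPiValid (s : QMLFormula S IV PV SYM ar) : Prop :=
  ∀ (M : QKPiMinusModel S SYM ar), M.IsQKPi IV PV →
    ∀ (g : QMLAssignment IV PV M) (w : M.W), M.sat s g w

/-- `s` contains no individual quantifier `∀X`. -/
def QMLFormula.noIndQuant : QMLFormula S IV PV SYM ar → Prop
  | .allI _ _ => False
  | .neg s => s.noIndQuant
  | .disj s t => s.noIndQuant ∧ t.noIndQuant
  | .allP _ s => s.noIndQuant
  | .box _ s => s.noIndQuant
  | _ => True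

/-- `s` contains no propositional quantifier `∀P`. -/
def QMLFormula.noPropQuant : QMLFormula S IV PV SYM ar → Prop
  | .allP _ _ => False
  | .neg s => s.noPropQuant
  | .disj s t => s.noPropQuant ∧ t.noPropQuant
  | .allI _ s => s.noPropQuant
  | .box _ s => s.noPropQuant
  | _ => True

/-- `s` is quantifier-free. -/
def QMLFormula.quantFree : QMLFormula S IV PV SYM ar → Prop
  | .allI _ _ => False
  | .allP _ _ => False
  | .neg s => s.quantFree
  | .disj s t => s.quantFree ∧ t.quantFree
  | .box _ s => s.quantFree
  | _ => True

/-! Only `∀P` reads the propositional domain, so enlarging it to the full powerset of the worlds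
changes the truth value of no `∀P`-free formula; and a model whose propositional domain is the
full powerset is trivially a QKΠ model. -/

theorem QMLFormula.quantFree.noPropQuant {s : QMLFormula S IV PV SYM ar} (hs : s.quantFree) :
    s.noPropQuant := by
  induction s with
  | prop | pred => trivial
  | neg _ ih | box _ _ ih => exact ih hs
  | disj _ _ ihs iht => exact ⟨ihs hs.1, iht hs.2⟩
  | allI | allP => exact hs.elim

namespace QKPiMinusModel

noncomputable def withFullPropDomain (M : QKPiMinusModel S SYM ar) : QKPiMinusModel S SYM ar :=
  { M with P := Set.univ, pNonempty := ⟨∅, trivial⟩ }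

theorem isQKPi_of_P_eq_univ (hP : M.P = Set.univ) : M.IsQKPi IV PV :=
  fun _ _ => hP ▸ Set.mem_univ _

end QKPiMinusModel

def QMLAssignment.toFullPropDomain (g : QMLAssignment IV PV M) :
    QMLAssignment IV PV M.withFullPropDomain :=
  ⟨g.iv, fun Q => ⟨(g.pv Q).1, trivial⟩⟩

theorem QKPiMinusModel.sat_withFullPropDomain_iff {s : QMLFormula S IV PV SYM ar}
    (hs : s.noPropQuant) (g : QMLAssignment IV PV M) (w : M.W) :
    M.withFullPropDomain.sat s g.toFullPropDomain w ↔ M.sat s g w := by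
  induction s generalizing g w with
  | prop | pred => rfl
  | neg _ ih => exact not_congr (ih hs g w)
  | disj _ _ ihs iht => exact or_congr (ihs hs.1 g w) (iht hs.2 g w)
  | allI _ _ ih => exact forall_congr' fun d => ih hs (g.updIV _ d) w
  | allP => exact hs.elim
  | box _ _ ih => exact forall₂_congr fun v _ => ih hs g v

/-- A quantifier-free formula is QKΠ-valid iff it is valid in
every standard Kripke multimodal model (propositional domain = full powerset). -/
theorem qkpiValid_iff_kripkeValid_quantFree (s : QMLFormula S IV PV SYM ar)
    (hs : s.quantFree) :
    QKPiValid s ↔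
      ∀ (M : QKPiMinusModel S SYM ar), M.P = Set.univ →
        ∀ (g : QMLAssignment IV PV M) (w : M.W), M.sat s g w := by
  constructor
  · intro hvalid M hP
    exact hvalid M (QKPiMinusModel.isQKPi_of_P_eq_univ hP)
  · intro hkripke M _ g w
    exact (M.sat_withFullPropDomain_iff hs.noPropQuant g w).mp
      (hkripke M.withFullPropDomain rfl g.toFullPropDomain w)
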